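/- arXiv:1311.1567 — 2 statements merged into one kernel-verified Lean document; each statement's English description precedes it below -/
import Mathlib

section
/- Let s₁,…,s_N ≥ 0, K > 0, and q₁,…,q_N ∈ ℝ². Then the matrix J_TDOA = (1/(Σ_p s_p + K))·(K·Σ_m s_m q_m q_mᵀ + Σ_{j<l} s_j s_l (q_j − q_l)(q_j − q_l)ᵀ) satisfies the identity J_TDOA = Σ_j s_j q_j q_jᵀ − (1/(Σ_p s_p + K))·(Σ_j s_j q_j)(Σ_m s_m q_m)ᵀ. -/
open Matrix

lemma key_scalar (N : ℕ) (s a b : Fin N → ℝ) :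
    ∑ j, ∑ l, (if j < l then s j * s l * ((a j - a l) * (b j - b l)) else 0)
      = (∑ j, s j) * (∑ j, s j * (a j * b j)) - (∑ j, s j * a j) * (∑ j, s j * b j) := by
  have h2 : (2 : ℝ) * ∑ j, ∑ l, (if j < l then s j * s l * ((a j - a l) * (b j - b l)) else 0)
      = ∑ j, ∑ l, s j * s l * ((a j - a l) * (b j - b l)) := by
    rw [two_mul]
    nth_rewrite 2 [Finset.sum_comm]
    rw [← Finset.sum_add_distrib]
    refine Finset.sum_congr rfl fun j _ => ?_
    rw [← Finset.sum_add_distrib]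
    refine Finset.sum_congr rfl fun l _ => ?_
    rcases lt_trichotomy j l with h | h | h
    · simp [h, not_lt_of_gt h]
    · simp [h]
    · simp [h, not_lt_of_gt h]; ring
  have h3 : ∑ j, ∑ l, s j * s l * ((a j - a l) * (b j - b l))
      = 2 * ((∑ j, s j) * (∑ j, s j * (a j * b j)) - (∑ j, s j * a j) * (∑ j, s j * b j)) := by
    have : ∀ j : Fin N, ∑ l, s j * s l * ((a j - a l) * (b j - b l))
        = (s j * (a j * b j)) * (∑ l, s l) - (s j * a j) * (∑ l, s l * b l)
          - (s j * b j) * (∑ l, s l * a l) + s j * (∑ l, s l * (a l * b l)) := by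
      intro j
      rw [Finset.mul_sum, Finset.mul_sum, Finset.mul_sum, Finset.mul_sum]
      rw [← Finset.sum_sub_distrib, ← Finset.sum_sub_distrib, ← Finset.sum_add_distrib]
      refine Finset.sum_congr rfl fun l _ => ?_
      ring
    rw [Finset.sum_congr rfl fun j _ => this j]
    simp only [Finset.sum_add_distrib, Finset.sum_sub_distrib, ← Finset.sum_mul]
    ring
  linarith [h2, h3]

theorem stmt_2 (N : ℕ) (s : Fin N → ℝ) (hs : ∀ j, 0 ≤ s j) (K : ℝ) (hK : 0 < K)
    (q : Fin N → Fin 2 → ℝ) :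
    (1 / (∑ p, s p + K)) •
        (K • ∑ m, s m • Matrix.vecMulVec (q m) (q m)
          + ∑ j, ∑ l, if j < l then
              (s j * s l) • Matrix.vecMulVec (q j - q l) (q j - q l)
            else (0 : Matrix (Fin 2) (Fin 2) ℝ))
      = ∑ j, s j • Matrix.vecMulVec (q j) (q j)
        - (1 / (∑ p, s p + K)) •
            Matrix.vecMulVec (∑ j, s j • q j) (∑ m, s m • q m) := by
  have hS : (0 : ℝ) ≤ ∑ p, s p := Finset.sum_nonneg fun p _ => hs p
  have hSK : (∑ p, s p) + K ≠ 0 := by positivity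
  ext i k
  simp only [Matrix.smul_apply, Matrix.sum_apply, Matrix.add_apply, Matrix.sub_apply, Finset.sum_apply,
    Matrix.vecMulVec_apply, Pi.smul_apply, Pi.sub_apply, smul_eq_mul, apply_ite
    (fun M : Matrix (Fin 2) (Fin 2) ℝ => M i k), Matrix.zero_apply]
  have hkey := key_scalar N s (fun j => q j i) (fun j => q j k)
  simp only [mul_assoc] at hkey ⊢
  rw [hkey]
  field_simp
  ring
end

section
/- Let φ̂ ∈ ℝ and 0 ≤ ε ≤ π/2. Then for every φ with |φ − φ̂| ≤ ε, the matrix J_φ(φ) − (J_φ(φ̂) − sin(ε)·I₂) is positive semidefinite, where J_φ(θ) = (cosθ, sinθ)(cosθ, sinθ)ᵀ. -/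
/-!
Write `a = cos² φ - cos² φ̂` and `b = cos φ sin φ - cos φ̂ sin φ̂`. Using `sin² = 1 - cos²`, the
matrix in question is `[[s + a, b], [b, s - a]]` with `s = sin ε`, and the identity
`a² + b² = sin² (φ - φ̂)` together with `|sin (φ - φ̂)| ≤ sin ε` gives nonnegative diagonal and
determinant `s² - a² - b² ≥ 0`.
-/

open Real Matrix

lemma Matrix.posSemidef_of_sq_le_mul {p q r : ℝ} (hp : 0 ≤ p) (hr : 0 ≤ r)
    (hdet : q ^ 2 ≤ p * r) : !![p, q; q, r].PosSemidef := by
  refine .of_dotProduct_mulVec_nonneg ?_ fun x => ?_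
  · ext i j
    fin_cases i <;> fin_cases j <;> rfl
  · simp only [dotProduct, mulVec, Fin.sum_univ_two, star_trivial, of_apply, cons_val',
      cons_val_zero, cons_val_one, empty_val', cons_val_fin_one]
    rcases hp.eq_or_lt with rfl | hp
    · obtain rfl : q = 0 := by nlinarith
      nlinarith [mul_nonneg hr (sq_nonneg (x 1))]
    · -- `p · Q(x) = (p x₀ + q x₁)² + (p r - q²) x₁²`
      have hpQ : 0 ≤ p * (x 0 * (p * x 0 + q * x 1) + x 1 * (q * x 0 + r * x 1)) := by
        nlinarith [sq_nonneg (p * x 0 + q * x 1), mul_nonneg (sub_nonneg.2 hdet) (sq_nonneg (x 1))]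
      exact nonneg_of_mul_nonneg_right hpQ hp

lemma Matrix.posSemidef_of_sq_add_sq_le {s a b : ℝ} (hs : 0 ≤ s) (h : a ^ 2 + b ^ 2 ≤ s ^ 2) :
    !![s + a, b; b, s - a].PosSemidef := by
  obtain ⟨has, hsa⟩ := abs_le.1 (abs_le_of_sq_le_sq (a := a) (by nlinarith) hs)
  exact posSemidef_of_sq_le_mul (by linarith) (by linarith) (by nlinarith)

lemma Real.sin_sub_sq (x y : ℝ) :
    sin (x - y) ^ 2 = (cos x ^ 2 - cos y ^ 2) ^ 2 + (cos x * sin x - cos y * sin y) ^ 2 := by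
  rw [sin_sub]
  linear_combination (cos x ^ 2 - cos y ^ 2) * sin_sq_add_cos_sq y
    + (cos y ^ 2 - cos x ^ 2) * sin_sq_add_cos_sq x

lemma Real.abs_sin_le_sin_of_abs_le {x ε : ℝ} (hx : |x| ≤ ε) (hε : ε ≤ π / 2) :
    |sin x| ≤ sin ε := by
  rw [abs_sin_eq_sin_abs_of_abs_le_pi (by linarith [pi_pos])]
  exact sin_le_sin_of_le_of_le_pi_div_two (by linarith [abs_nonneg x, pi_pos]) hε hx

theorem stmt_8_general (φh ε : ℝ) (hε : ε ≤ π / 2) (φ : ℝ)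
    (hφ : |φ - φh| ≤ ε) :
    (Matrix.vecMulVec ![Real.cos φ, Real.sin φ] ![Real.cos φ, Real.sin φ]
      - (Matrix.vecMulVec ![Real.cos φh, Real.sin φh] ![Real.cos φh, Real.sin φh]
          - Real.sin ε • (1 : Matrix (Fin 2) (Fin 2) ℝ))).PosSemidef := by
  set a := cos φ ^ 2 - cos φh ^ 2
  set b := cos φ * sin φ - cos φh * sin φh
  have hsin : |sin (φ - φh)| ≤ sin ε := abs_sin_le_sin_of_abs_le hφ hε
  have hab : a ^ 2 + b ^ 2 ≤ sin ε ^ 2 := by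
    rw [← sin_sub_sq, ← sq_abs]
    exact pow_le_pow_left₀ (abs_nonneg _) hsin 2
  convert posSemidef_of_sq_add_sq_le ((abs_nonneg _).trans hsin) hab using 1
  ext i j
  fin_cases i <;> fin_cases j <;> simp [a, b]
  · ring
  · ring
  · linear_combination sin_sq_add_cos_sq φ - sin_sq_add_cos_sq φh

theorem stmt_8 (φh ε : ℝ) (hε0 : 0 ≤ ε) (hε : ε ≤ π / 2) (φ : ℝ)
    (hφ : |φ - φh| ≤ ε) :
    (Matrix.vecMulVec ![Real.cos φ, Real.sin φ] ![Real.cos φ, Real.sin φ]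
      - (Matrix.vecMulVec ![Real.cos φh, Real.sin φh] ![Real.cos φh, Real.sin φh]
          - Real.sin ε • (1 : Matrix (Fin 2) (Fin 2) ℝ))).PosSemidef :=
  stmt_8_general φh ε hε φ hφ
end
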